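/- arXiv:1305.3464 — 4 statements merged into one kernel-verified Lean document; each statement's English description precedes it below -/
import Mathlib

section
/- Let $k$ be an algebraically closed field of characteristic $0$ and let $q_0, q_1 \in k[X_0,X_1,X_2]$ be two linearly independent homogeneous quadratic forms. Suppose that every nonzero form in the pencil $k q_0 + k q_1$ factors as a product of two linear forms. Then either $q_0$ and $q_1$ have a common linear factor, or there exists a point $p \in \mathbb{P}^2$ at which all partial derivatives of both $q_0$ and $q_1$ vanish (a common singular point of the two conics). -/
/-!
Write `q₀ = l₁ l₂` and `q₁ = m₁ m₂` with linear forms whose coefficient vectors are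
`u₁, u₂, w₁, w₂ ∈ k³`. Every member of the pencil is a product of two linear forms, so its
discriminant vanishes identically in `s, t`. If `u₁, u₂, w₁` were a basis, then in the dual
coordinates the pencil would read `s x₀ x₁ + t x₂ (b ⬝ᵥ x)`, whose discriminant is a nonzero
multiple of `s t² b₀ b₁ - s² t b₂`; hence `b₂ = 0 = b₀ b₁`, i.e. `m₂` is proportional to `l₁` or
to `l₂`. So, unless some `mⱼ` is proportional to some `lᵢ` (a common factor), the vectors
`u₁, u₂, w₁, w₂` lie in a plane, and its normal vector is a common zero of the four linear
forms, hence a common singular point of the two conics.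
-/

open MvPolynomial Matrix QuadraticMap

section LinearForm

variable {σ R : Type*} [CommSemiring R] [Fintype σ]

noncomputable def linearForm : (σ → R) →ₗ[R] MvPolynomial σ R :=
  Fintype.linearCombination R X

lemma eval_linearForm (u x : σ → R) : eval x (linearForm u) = u ⬝ᵥ x := by
  simp [linearForm, Fintype.linearCombination_apply, dotProduct]

lemma isHomogeneous_one_iff_exists_linearForm_eq {l : MvPolynomial σ R} :
    l.IsHomogeneous 1 ↔ ∃ u, linearForm u = l := by
  rw [← mem_homogeneousSubmodule, homogeneousSubmodule_one_eq_span_X,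
    ← Fintype.range_linearCombination]
  rfl

lemma isHomogeneous_linearForm (u : σ → R) : (linearForm u).IsHomogeneous 1 :=
  isHomogeneous_one_iff_exists_linearForm_eq.2 ⟨u, rfl⟩

lemma exists_eq_linearForm_mul_linearForm {p l m : MvPolynomial σ R} (hl : l.IsHomogeneous 1)
    (hm : m.IsHomogeneous 1) (h : p = l * m) :
    ∃ u v : σ → R, p = linearForm u * linearForm v := by
  obtain ⟨u, rfl⟩ := isHomogeneous_one_iff_exists_linearForm_eq.1 hl
  obtain ⟨v, rfl⟩ := isHomogeneous_one_iff_exists_linearForm_eq.1 hm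
  exact ⟨u, v, h⟩

end LinearForm

lemma eval_pderiv_mul_eq_zero {σ R : Type*} [CommSemiring R] {p q : MvPolynomial σ R}
    {a : σ → R} (hp : eval a p = 0) (hq : eval a q = 0) (i : σ) :
    eval a (pderiv i (p * q)) = 0 := by
  simp [Derivation.leibniz, hp, hq]

section QuadraticForm

variable {R : Type*} [CommRing R] {n : Type*} [Fintype n]

noncomputable abbrev linMulLinDot (u v : n → R) : QuadraticForm R (n → R) :=
  linMulLin (dotProductBilin R R u) (dotProductBilin R R v)

lemma eval_linearForm_mul_linearForm (u v x : n → R) :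
    eval x (linearForm u * linearForm v) = linMulLinDot u v x := by
  simp [eval_linearForm]

lemma linMulLinDot_comm (u v : n → R) : linMulLinDot u v = linMulLinDot v u := by
  ext x; exact mul_comm _ _

lemma linMulLinDot_comp_toLin' [DecidableEq n] (u v : n → R) (A : Matrix n n R) :
    (linMulLinDot u v).comp (toLin' A) = linMulLinDot (u ᵥ* A) (v ᵥ* A) := by
  ext x; simp [dotProduct_mulVec]

variable [Invertible (2 : R)]

lemma toMatrix'_linMulLinDot [DecidableEq n] (u v : n → R) :
    (linMulLinDot u v).toMatrix' = ⅟(2 : R) • (vecMulVec u v + vecMulVec v u) := by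
  ext i j
  simp [QuadraticForm.toMatrix', vecMulVec_apply]
  ring

lemma discr'_linMulLinDot (u v : Fin 3 → R) : (linMulLinDot u v).discr' = 0 := by
  simp [QuadraticForm.discr', toMatrix'_linMulLinDot, det_fin_three, vecMulVec_apply]
  ring

end QuadraticForm

lemma exists_common_zero_of_det_eq_zero {R : Type*} [CommRing R] {u v w w' : Fin 3 → R}
    (h : u ⨯₃ v ≠ 0) (hw : det ![u, v, w] = 0) (hw' : det ![u, v, w'] = 0) :
    ∃ a ≠ 0, u ⬝ᵥ a = 0 ∧ v ⬝ᵥ a = 0 ∧ w ⬝ᵥ a = 0 ∧ w' ⬝ᵥ a = 0 :=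
  ⟨u ⨯₃ v, h, dot_self_cross u v, dot_cross_self u v,
    by rwa [triple_product_permutation, triple_product_eq_det],
    by rwa [triple_product_permutation, triple_product_eq_det]⟩

section Pencil

variable {k : Type*} [Field k]

lemma exists_eq_smul_of_cross_eq_zero {u w : Fin 3 → k} (hu : u ≠ 0) (h : u ⨯₃ w = 0) :
    ∃ c : k, w = c • u := by
  by_contra! hw
  exact crossProduct_ne_zero_iff_linearIndependent.2
    ((LinearIndependent.pair_iff' hu).2 fun c => (hw c).symm) h

lemma exists_linearForm_dvd_of_cross_eq_zero {u₁ u₂ w₁ w₂ u w : Fin 3 → k}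
    (hu : u ∈ ({u₁, u₂} : Set (Fin 3 → k))) (hw : w ∈ ({w₁, w₂} : Set (Fin 3 → k)))
    (huw : u ⨯₃ w = 0) (hq₀ : linearForm u₁ * linearForm u₂ ≠ 0) :
    ∃ l : MvPolynomial (Fin 3) k, l.IsHomogeneous 1 ∧ l ≠ 0 ∧
      l ∣ linearForm u₁ * linearForm u₂ ∧ l ∣ linearForm w₁ * linearForm w₂ := by
  have hlu : linearForm u ≠ 0 := by
    obtain ⟨hu₁, hu₂⟩ := ne_zero_and_ne_zero_of_mul hq₀
    rcases hu with rfl | rfl <;> assumption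
  obtain ⟨c, rfl⟩ := exists_eq_smul_of_cross_eq_zero (ne_zero_of_map hlu) huw
  have hdvd : linearForm u ∣ linearForm (c • u) :=
    ⟨C c, by rw [map_smul, smul_eq_C_mul, mul_comm]⟩
  refine ⟨linearForm u, isHomogeneous_linearForm u, hlu, ?_, ?_⟩
  · rcases hu with rfl | rfl <;> simp
  · rcases hw with rfl | rfl
    exacts [hdvd.mul_right _, hdvd.mul_left _]

variable [Invertible (2 : k)]

lemma discr'_smul_linMulLinDot_single_add (s t : k) (b : Fin 3 → k) :
    (s • linMulLinDot (Pi.single 0 1) (Pi.single 1 1) + t • linMulLinDot (Pi.single 2 1) b).discr'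
      = ⅟(2 : k) ^ 2 * (s * t ^ 2 * (b 0 * b 1) - s ^ 2 * t * b 2) := by
  have h2 : (2 : k) ≠ 0 := (isUnit_of_invertible 2).ne_zero
  simp [QuadraticForm.discr', QuadraticForm.toMatrix', det_fin_three]
  field_simp
  ring

lemma cross_eq_zero_or_cross_eq_zero_of_det_ne_zero {u₁ u₂ w₁ w₂ : Fin 3 → k}
    (hdet : det ![u₁, u₂, w₁] ≠ 0)
    (hpencil : ∀ s t : k, (s • linMulLinDot u₁ u₂ + t • linMulLinDot w₁ w₂).discr' = 0) :
    u₁ ⨯₃ w₂ = 0 ∨ u₂ ⨯₃ w₂ = 0 := by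
  set M : Matrix (Fin 3) (Fin 3) k := ![u₁, u₂, w₁]
  have hM : IsUnit M.det := hdet.isUnit
  have hrow (i : Fin 3) : M.row i ᵥ* M⁻¹ = Pi.single i 1 := by
    rw [← single_one_vecMul, vecMul_vecMul, mul_nonsing_inv _ hM, vecMul_one]
  set b := w₂ ᵥ* M⁻¹
  have hw₂ : w₂ = b 0 • u₁ + b 1 • u₂ + b 2 • w₁ := by
    have : b ᵥ* M = w₂ := by rw [vecMul_vecMul, nonsing_inv_mul _ hM, vecMul_one]
    rw [← this, vecMul_eq_sum, Fin.sum_univ_three]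
    rfl
  have hnormal (s t : k) :
      (s • linMulLinDot (Pi.single 0 1) (Pi.single 1 1) + t • linMulLinDot (Pi.single 2 1) b).discr'
        = 0 := by
    have := QuadraticForm.discr'_comp (Q := s • linMulLinDot u₁ u₂ + t • linMulLinDot w₁ w₂)
      (toLin' M⁻¹)
    rw [hpencil, mul_zero] at this
    rw [← hrow 0, ← hrow 1, ← hrow 2, ← linMulLinDot_comp_toLin', ← linMulLinDot_comp_toLin']
    convert this using 2
    ext x; simp; rfl
  have h2 : (2 : k) ≠ 0 := (isUnit_of_invertible 2).ne_zero
  have hsum : b 0 * b 1 - b 2 = 0 := by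
    simpa [h2] using (discr'_smul_linMulLinDot_single_add 1 1 b).symm.trans (hnormal 1 1)
  have hdiff : b 0 * b 1 + b 2 = 0 := by
    simpa [h2] using (discr'_smul_linMulLinDot_single_add 1 (-1) b).symm.trans (hnormal 1 (-1))
  have hb₂ : b 2 = 0 := by
    simpa [h2] using (show 2 * b 2 = 0 by linear_combination hdiff - hsum)
  rcases mul_eq_zero.1 (show b 0 * b 1 = 0 by linear_combination hsum + hb₂) with hb₀ | hb₁
  · right; simp [hw₂, hb₀, hb₂]
  · left; simp [hw₂, hb₁, hb₂]

lemma exists_cross_eq_zero_or_exists_common_zero_of_cross_ne_zero {u₁ u₂ w₁ w₂ : Fin 3 → k}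
    (hu : u₁ ⨯₃ u₂ ≠ 0)
    (hpencil : ∀ s t : k, (s • linMulLinDot u₁ u₂ + t • linMulLinDot w₁ w₂).discr' = 0) :
    (∃ u ∈ ({u₁, u₂} : Set (Fin 3 → k)), ∃ w ∈ ({w₁, w₂} : Set (Fin 3 → k)), u ⨯₃ w = 0) ∨
      ∃ a ≠ 0, u₁ ⬝ᵥ a = 0 ∧ u₂ ⬝ᵥ a = 0 ∧ w₁ ⬝ᵥ a = 0 ∧ w₂ ⬝ᵥ a = 0 := by
  by_cases hw₁ : det ![u₁, u₂, w₁] = 0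
  · by_cases hw₂ : det ![u₁, u₂, w₂] = 0
    · exact Or.inr (exists_common_zero_of_det_eq_zero hu hw₁ hw₂)
    · have hpencil' (s t : k) :
          (s • linMulLinDot u₁ u₂ + t • linMulLinDot w₂ w₁).discr' = 0 := by
        rw [linMulLinDot_comm w₂]; exact hpencil s t
      rcases cross_eq_zero_or_cross_eq_zero_of_det_ne_zero hw₂ hpencil' with h | h
      exacts [Or.inl ⟨u₁, by simp, w₁, by simp, h⟩, Or.inl ⟨u₂, by simp, w₁, by simp, h⟩]
  · rcases cross_eq_zero_or_cross_eq_zero_of_det_ne_zero hw₁ hpencil with h | h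
    exacts [Or.inl ⟨u₁, by simp, w₂, by simp, h⟩, Or.inl ⟨u₂, by simp, w₂, by simp, h⟩]

lemma exists_cross_eq_zero_or_exists_common_zero {u₁ u₂ w₁ w₂ : Fin 3 → k}
    (hu₁ : u₁ ≠ 0) (hw₁ : w₁ ≠ 0)
    (hpencil : ∀ s t : k, (s • linMulLinDot u₁ u₂ + t • linMulLinDot w₁ w₂).discr' = 0) :
    (∃ u ∈ ({u₁, u₂} : Set (Fin 3 → k)), ∃ w ∈ ({w₁, w₂} : Set (Fin 3 → k)), u ⨯₃ w = 0) ∨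
      ∃ a ≠ 0, u₁ ⬝ᵥ a = 0 ∧ u₂ ⬝ᵥ a = 0 ∧ w₁ ⬝ᵥ a = 0 ∧ w₂ ⬝ᵥ a = 0 := by
  by_cases hu : u₁ ⨯₃ u₂ = 0
  · by_cases hw : w₁ ⨯₃ w₂ = 0
    · by_cases huw : u₁ ⨯₃ w₁ = 0
      · exact Or.inl ⟨u₁, by simp, w₁, by simp, huw⟩
      obtain ⟨c, rfl⟩ := exists_eq_smul_of_cross_eq_zero hu₁ hu
      obtain ⟨d, rfl⟩ := exists_eq_smul_of_cross_eq_zero hw₁ hw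
      exact Or.inr ⟨u₁ ⨯₃ w₁, huw, dot_self_cross _ _, by simp [dot_self_cross],
        dot_cross_self _ _, by simp [dot_cross_self]⟩
    · have hpencil' (s t : k) :
          (s • linMulLinDot w₁ w₂ + t • linMulLinDot u₁ u₂).discr' = 0 := by
        rw [add_comm]; exact hpencil t s
      rcases exists_cross_eq_zero_or_exists_common_zero_of_cross_ne_zero hw hpencil' with
        ⟨w, hw, u, hu, h⟩ | ⟨a, ha, h₁, h₂, h₃, h₄⟩
      · exact Or.inl ⟨u, hu, w, hw, by rw [← cross_anticomm, h, neg_zero]⟩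
      · exact Or.inr ⟨a, ha, h₃, h₄, h₁, h₂⟩
  · exact exists_cross_eq_zero_or_exists_common_zero_of_cross_ne_zero hu hpencil

lemma discr'_eq_zero_of_forall_eq_mul {u₁ u₂ w₁ w₂ : Fin 3 → k}
    (hsing : ∀ s t : k, (s, t) ≠ (0, 0) →
      ∃ l m : MvPolynomial (Fin 3) k, l.IsHomogeneous 1 ∧ m.IsHomogeneous 1 ∧
        s • (linearForm u₁ * linearForm u₂) + t • (linearForm w₁ * linearForm w₂) = l * m)
    (s t : k) : (s • linMulLinDot u₁ u₂ + t • linMulLinDot w₁ w₂).discr' = 0 := by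
  obtain hst | hst := eq_or_ne (s, t) (0, 0)
  · obtain ⟨rfl, rfl⟩ := Prod.mk.inj hst
    simp [QuadraticForm.discr', QuadraticForm.toMatrix']
  obtain ⟨l, m, hl, hm, hlm⟩ := hsing s t hst
  obtain ⟨a, b, hab⟩ := exists_eq_linearForm_mul_linearForm hl hm hlm
  convert discr'_linMulLinDot a b using 2
  ext x
  simpa [eval_linearForm_mul_linearForm] using congrArg (eval x) hab

end Pencil

theorem pencil_of_singular_conics_general {k : Type*} [Field k] [CharZero k]
    (q₀ q₁ : MvPolynomial (Fin 3) k)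
    (hind : LinearIndependent k ![q₀, q₁])
    (hsing : ∀ c₀ c₁ : k, (c₀, c₁) ≠ (0, 0) →
      ∃ l m : MvPolynomial (Fin 3) k, l.IsHomogeneous 1 ∧ m.IsHomogeneous 1 ∧
        c₀ • q₀ + c₁ • q₁ = l * m) :
    (∃ l : MvPolynomial (Fin 3) k, l.IsHomogeneous 1 ∧ l ≠ 0 ∧ l ∣ q₀ ∧ l ∣ q₁) ∨
      (∃ a : Fin 3 → k, a ≠ 0 ∧
        (∀ i, eval a (pderiv i q₀) = 0) ∧ (∀ i, eval a (pderiv i q₁) = 0)) := by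
  have : Invertible (2 : k) := invertibleOfNonzero two_ne_zero
  obtain ⟨l, m, hl, hm, hlm⟩ := hsing 1 0 (by simp)
  obtain ⟨u₁, u₂, rfl⟩ := exists_eq_linearForm_mul_linearForm hl hm (by simpa using hlm)
  obtain ⟨l, m, hl, hm, hlm⟩ := hsing 0 1 (by simp)
  obtain ⟨w₁, w₂, rfl⟩ := exists_eq_linearForm_mul_linearForm hl hm (by simpa using hlm)
  have hq₀ : linearForm u₁ * linearForm u₂ ≠ 0 := by simpa using hind.ne_zero 0
  have hq₁ : linearForm w₁ * linearForm w₂ ≠ 0 := by simpa using hind.ne_zero 1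
  rcases exists_cross_eq_zero_or_exists_common_zero
      (ne_zero_of_map (ne_zero_and_ne_zero_of_mul hq₀).1)
      (ne_zero_of_map (ne_zero_and_ne_zero_of_mul hq₁).1)
      (discr'_eq_zero_of_forall_eq_mul hsing) with
    ⟨u, hu, w, hw, huw⟩ | ⟨a, ha, h₁, h₂, h₃, h₄⟩
  · exact Or.inl (exists_linearForm_dvd_of_cross_eq_zero hu hw huw hq₀)
  · rw [← eval_linearForm] at h₁ h₂ h₃ h₄
    exact Or.inr ⟨a, ha, eval_pderiv_mul_eq_zero h₁ h₂, eval_pderiv_mul_eq_zero h₃ h₄⟩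

/-- A pencil of plane conics consisting entirely of singular members either has a
common linear factor or a common singular point. -/
theorem pencil_of_singular_conics {k : Type*} [Field k] [IsAlgClosed k] [CharZero k]
    (q₀ q₁ : MvPolynomial (Fin 3) k)
    (hq₀ : q₀.IsHomogeneous 2) (hq₁ : q₁.IsHomogeneous 2)
    (hind : LinearIndependent k ![q₀, q₁])
    (hsing : ∀ c₀ c₁ : k, (c₀, c₁) ≠ (0, 0) →
      ∃ l m : MvPolynomial (Fin 3) k, l.IsHomogeneous 1 ∧ m.IsHomogeneous 1 ∧
        c₀ • q₀ + c₁ • q₁ = l * m) :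
    (∃ l : MvPolynomial (Fin 3) k, l.IsHomogeneous 1 ∧ l ≠ 0 ∧ l ∣ q₀ ∧ l ∣ q₁) ∨
      (∃ a : Fin 3 → k, a ≠ 0 ∧
        (∀ i, eval a (pderiv i q₀) = 0) ∧ (∀ i, eval a (pderiv i q₁) = 0)) :=
  pencil_of_singular_conics_general q₀ q₁ hind hsing
end

section
/- (Bilinear map lemma) Let $k$ be an algebraically closed field and let $U$, $V$, $W$ be finite-dimensional $k$-vector spaces with $U \neq 0$ and $V \neq 0$. Let $\varphi : U \times V \to W$ be a bilinear map such that $\varphi(u,v) \neq 0$ whenever $u \neq 0$ and $v \neq 0$. Then $\dim W \geq \dim U + \dim V - 1$. -/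
/-!
Let `S = k[x, y]` be the coordinate ring of `U × V` and `R ⊆ S` the subring spanned by the monomials
of equal degree in `x` and in `y`, i.e. the degree-`0` part for the grading `deg xᵢ = 1`,
`deg yⱼ = -1` (the homogeneous coordinate ring of the Segre embedding). The `r = dim W` coordinates
of `φ` are elements of `R` whose common zeros lie in `{x = 0} ∪ {y = 0}`. By the Nullstellensatz,
and since the degree-`0` projection makes `R` a direct summand of `S` as an `R`-module, the
irrelevant ideal of `R` is minimal over the ideal they generate, so by Krull's height theorem its
height is at most `r`. On the other hand, contracting to `R` the ideals of `S` generated by the `xᵢ`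
with `i ≠ i₀` and then successively by `y₁, …, yₙ` gives a strictly increasing chain of primes of
length `dim U + dim V - 1` below it.
-/

open MvPolynomial

namespace GradedRing

variable {ι A σ : Type*} [DecidableEq ι] [AddMonoid ι] [CommSemiring A] [SetLike σ A]
  [AddSubmonoidClass σ A] (𝒜 : ι → σ) [GradedRing 𝒜]

theorem comap_map_gradeZero (J : Ideal (𝒜 0)) :
    (J.map (algebraMap (𝒜 0) A)).comap (algebraMap (𝒜 0) A) = J := by
  refine le_antisymm (fun x hx => ?_) Ideal.le_comap_map
  -- the degree-`0` projection is `𝒜 0`-linear and maps `J • A` back into `J`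
  suffices ∀ y ∈ J.map (algebraMap (𝒜 0) A), ∀ a : A, DirectSum.decompose 𝒜 (a * y) 0 ∈ J by
    simpa [DirectSum.decompose_coe] using this _ hx 1
  intro y hy
  induction hy using Submodule.span_induction with
  | mem y hy =>
    obtain ⟨j, hj, rfl⟩ := hy
    intro a
    have : DirectSum.decompose 𝒜 (a * j) 0 = DirectSum.decompose 𝒜 a 0 * j :=
      Subtype.ext (DirectSum.coe_decompose_mul_of_right_mem_zero 𝒜 j.2)
    rw [SetLike.GradeZero.algebraMap_apply, this]
    exact J.mul_mem_left _ hj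
  | zero => simp
  | add y z _ _ hy hz => intro a; simpa [mul_add] using J.add_mem (hy a) (hz a)
  | smul s y _ hy => intro a; simpa [mul_assoc] using hy (a * s)

theorem isNoetherianRing_gradeZero [IsNoetherianRing A] : IsNoetherianRing (𝒜 0) := by
  rw [isNoetherianRing_iff, isNoetherian_iff']
  have hinj : Function.Injective (Ideal.map (algebraMap (𝒜 0) A)) :=
    Function.LeftInverse.injective (comap_map_gradeZero 𝒜)
  exact (Monotone.strictMono_of_injective (fun _ _ => Ideal.map_mono) hinj).wellFoundedGT

end GradedRing

noncomputable section

namespace MvPolynomial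

variable {k α : Type*} [CommSemiring k]

def killVars (s : Set α) : MvPolynomial α k →ₐ[k] MvPolynomial α k :=
  aeval (sᶜ.indicator X)

theorem killVars_X (s : Set α) (v : α) [Decidable (v ∈ s)] :
    killVars s (X v : MvPolynomial α k) = if v ∈ s then 0 else X v := by
  by_cases hv : v ∈ s <;> simp [killVars, hv]

theorem killVars_comp_of_subset {s t : Set α} (hst : s ⊆ t) :
    (killVars t).comp (killVars s) = (killVars t : MvPolynomial α k →ₐ[k] _) := by
  classical
  ext v
  by_cases hv : v ∈ s
  · simp [killVars_X, hv, hst hv]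
  · simp [killVars_X, hv]

theorem constantCoeff_killVars (s : Set α) (p : MvPolynomial α k) :
    constantCoeff (killVars s p) = constantCoeff p := by
  classical
  induction p using MvPolynomial.induction_on with
  | C a => simp
  | add p q hp hq => simp [hp, hq]
  | mul_X p v hp => by_cases hv : v ∈ s <;> simp [killVars_X, hv, hp]

end MvPolynomial

attribute [local instance] MvPolynomial.weightedGradedAlgebra

section Segre

variable (k ι κ : Type*) [CommSemiring k]

def segreWeight : ι ⊕ κ → ℤ := Sum.elim (fun _ => 1) (fun _ => -1)

abbrev segreGrading : ℤ → Submodule k (MvPolynomial (ι ⊕ κ) k) :=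
  weightedHomogeneousSubmodule k (segreWeight ι κ)

abbrev SegreRing := segreGrading k ι κ 0

end Segre

namespace SegreRing

variable {k ι κ : Type*}

local notation "S" => MvPolynomial (ι ⊕ κ) k

section CommSemiring

variable [CommSemiring k]

theorem X_mul_X_mem (i : ι) (j : κ) : (X (Sum.inl i) * X (Sum.inr j) : S) ∈ SegreRing k ι κ := by
  have := (isWeightedHomogeneous_X k (segreWeight ι κ) (Sum.inl i)).mul
    (isWeightedHomogeneous_X k (segreWeight ι κ) (Sum.inr j))
  simpa [segreWeight] using this

variable [Fintype ι] [Fintype κ]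

theorem sum_inl_eq_sum_inr {ν : ι ⊕ κ →₀ ℕ} (hν : Finsupp.weight (segreWeight ι κ) ν = 0) :
    ∑ i, ν (Sum.inl i) = ∑ j, ν (Sum.inr j) := by
  rw [Finsupp.weight_apply, Finsupp.sum_fintype _ _ (by simp), Fintype.sum_sum_type] at hν
  simp only [segreWeight, Sum.elim_inl, Sum.elim_inr, smul_neg, nsmul_eq_mul, mul_one,
    Finset.sum_neg_distrib, ← sub_eq_add_neg, sub_eq_zero] at hν
  exact_mod_cast hν

theorem eq_zero_of_forall_inl_eq_zero {ν : ι ⊕ κ →₀ ℕ}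
    (hν : Finsupp.weight (segreWeight ι κ) ν = 0) (h : ∀ i, ν (Sum.inl i) = 0) : ν = 0 := by
  have hsum : ∑ j, ν (Sum.inr j) = 0 := by simp [← sum_inl_eq_sum_inr hν, h]
  ext (i | j)
  · simp [h]
  · simpa using Finset.sum_eq_zero_iff.mp hsum j (Finset.mem_univ _)

theorem eq_zero_of_forall_inr_eq_zero {ν : ι ⊕ κ →₀ ℕ}
    (hν : Finsupp.weight (segreWeight ι κ) ν = 0) (h : ∀ j, ν (Sum.inr j) = 0) : ν = 0 := by
  have hsum : ∑ i, ν (Sum.inl i) = 0 := by simp [sum_inl_eq_sum_inr hν, h]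
  ext (i | j)
  · simpa using Finset.sum_eq_zero_iff.mp hsum i (Finset.mem_univ _)
  · simp [h]

theorem eval_eq_zero_of_constantCoeff_eq_zero {p : S} (hp : p ∈ SegreRing k ι κ)
    (hp₀ : constantCoeff p = 0) {a : ι ⊕ κ → k}
    (ha : (∀ i, a (Sum.inl i) = 0) ∨ (∀ j, a (Sum.inr j) = 0)) : eval a p = 0 := by
  rw [eval_eq']
  refine Finset.sum_eq_zero fun ν hν => ?_
  have hw : Finsupp.weight (segreWeight ι κ) ν = 0 := hp (mem_support_iff.mp hν)
  by_cases hν₀ : ν = 0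
  · simp [hν₀, ← constantCoeff_eq, hp₀]
  obtain ⟨v, hav, hνv⟩ : ∃ v, a v = 0 ∧ ν v ≠ 0 := by
    by_contra! h
    rcases ha with ha | ha
    · exact hν₀ (eq_zero_of_forall_inl_eq_zero hw fun i => h _ (ha i))
    · exact hν₀ (eq_zero_of_forall_inr_eq_zero hw fun j => h _ (ha j))
  exact mul_eq_zero_of_right _ (Finset.prod_eq_zero (Finset.mem_univ v) (by simp [hav, hνv]))

end CommSemiring

variable [Field k]

variable (k ι κ) in
def irrelevantIdeal : Ideal (SegreRing k ι κ) :=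
  RingHom.ker (constantCoeff.comp (algebraMap (SegreRing k ι κ) S))

instance : (irrelevantIdeal k ι κ).IsPrime := RingHom.ker_isPrime _

variable (k) in
def varIdeal (s : Set (ι ⊕ κ)) : Ideal (SegreRing k ι κ) :=
  RingHom.ker ((killVars s).toRingHom.comp (algebraMap (SegreRing k ι κ) S))

instance (s : Set (ι ⊕ κ)) : (varIdeal k s).IsPrime := RingHom.ker_isPrime _

theorem varIdeal_le_irrelevantIdeal (s : Set (ι ⊕ κ)) :
    varIdeal k s ≤ irrelevantIdeal k ι κ := fun p hp => by
  simpa [irrelevantIdeal, constantCoeff_killVars] using congrArg constantCoeff hp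

theorem varIdeal_lt_varIdeal {s t : Set (ι ⊕ κ)} (hst : s ⊆ t) {v w : ι ⊕ κ}
    (hvw : X v * X w ∈ SegreRing k ι κ) (hvs : v ∉ s) (hvt : v ∈ t) (hwt : w ∉ t) :
    varIdeal k s < varIdeal k t := by
  classical
  refine SetLike.lt_iff_le_and_exists.mpr ⟨fun p hp => ?_, ⟨_, hvw⟩, ?_, ?_⟩
  · have : killVars t (killVars s (p : S)) = 0 := by simp [varIdeal] at hp; simp [hp]
    simpa [varIdeal, ← AlgHom.comp_apply, killVars_comp_of_subset hst] using this
  · simp [varIdeal, killVars_X, hvt]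
  · have hws : w ∉ s := fun h => hwt (hst h)
    simp [varIdeal, killVars_X, hvs, hws, X_ne_zero]

theorem height_add_card_le_height_varIdeal {s : Set (ι ⊕ κ)} {w : ι ⊕ κ} (hws : w ∉ s)
    (T : Finset (ι ⊕ κ)) (hwT : w ∉ T) (hsT : Disjoint s T)
    (hT : ∀ v ∈ T, X v * X w ∈ SegreRing k ι κ) :
    (varIdeal k s).height + T.card ≤ (varIdeal k (s ∪ T)).height := by
  classical
  induction T using Finset.induction_on with
  | empty => simp
  | insert v T hvT ih =>
    simp only [Finset.mem_insert, not_or, Finset.coe_insert, Set.disjoint_insert_right] at hwT hsT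
    have hlt : varIdeal k (s ∪ T) < varIdeal k (s ∪ insert v T) :=
      varIdeal_lt_varIdeal (by gcongr; exact Set.subset_insert _ _) (hT v (by simp))
        (by simp [hsT.1, hvT]) (by simp) (by simp [hws, hwT.1, hwT.2])
    calc (varIdeal k s).height + (insert v T).card
        = (varIdeal k s).height + T.card + 1 := by
          rw [Finset.card_insert_of_notMem hvT, Nat.cast_succ, add_assoc]
      _ ≤ (varIdeal k (s ∪ T)).height + 1 :=
        add_le_add (ih hwT.2 hsT.2 fun u hu => hT u (Finset.mem_insert_of_mem hu)) le_rfl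
      _ ≤ _ := Ideal.height_add_one_le_of_lt_of_isPrime hlt
      _ = _ := by rw [Finset.coe_insert]

variable [Fintype ι] [Fintype κ]

instance : IsNoetherianRing (SegreRing k ι κ) :=
  GradedRing.isNoetherianRing_gradeZero _

theorem card_add_card_sub_one_le_height_irrelevantIdeal [Nonempty ι] [Nonempty κ] :
    ((Fintype.card ι + Fintype.card κ - 1 : ℕ) : ℕ∞) ≤ (irrelevantIdeal k ι κ).height := by
  classical
  obtain ⟨i₀⟩ := ‹Nonempty ι›
  obtain ⟨j₀⟩ := ‹Nonempty κ›
  set T₁ := (Finset.univ.erase i₀).map Function.Embedding.inl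
  set T₂ := Finset.univ.map (Function.Embedding.inr : κ ↪ ι ⊕ κ)
  have hT₁ : ∀ v ∈ T₁, X v * X (Sum.inr j₀) ∈ SegreRing k ι κ := by
    simp only [T₁, Finset.mem_map, Function.Embedding.inl_apply]
    rintro _ ⟨i, -, rfl⟩
    exact X_mul_X_mem i j₀
  have hT₂ : ∀ v ∈ T₂, X v * X (Sum.inl i₀) ∈ SegreRing k ι κ := by
    simp only [T₂, Finset.mem_map, Function.Embedding.inr_apply]
    rintro _ ⟨j, -, rfl⟩
    rw [mul_comm]
    exact X_mul_X_mem i₀ j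
  have h₁ := height_add_card_le_height_varIdeal (k := k) (s := ∅) (w := Sum.inr j₀)
    (Set.notMem_empty _) T₁ (by simp [T₁]) (Set.empty_disjoint _) hT₁
  have h₂ := height_add_card_le_height_varIdeal (k := k) (s := ∅ ∪ T₁) (w := Sum.inl i₀)
    (by simp [T₁]) T₂ (by simp [T₂]) (by simp [T₁, T₂, Set.disjoint_left]) hT₂
  calc ((Fintype.card ι + Fintype.card κ - 1 : ℕ) : ℕ∞)
      = T₁.card + T₂.card := by
        have := Fintype.card_pos (α := ι)
        simp only [T₁, T₂, Finset.card_map, Finset.card_erase_of_mem (Finset.mem_univ _),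
          Finset.card_univ]
        norm_cast
        omega
    _ ≤ (varIdeal k (∅ : Set (ι ⊕ κ))).height + T₁.card + T₂.card := by
        gcongr; exact le_add_self
    _ ≤ (varIdeal k (∅ ∪ ↑T₁ ∪ ↑T₂ : Set (ι ⊕ κ))).height := (add_le_add h₁ le_rfl).trans h₂
    _ ≤ (irrelevantIdeal k ι κ).height := Ideal.height_mono (varIdeal_le_irrelevantIdeal _)

theorem height_irrelevantIdeal_le [IsAlgClosed k] {τ : Type*} [Fintype τ] (F : τ → S)
    (hF : ∀ t, F t ∈ SegreRing k ι κ) (hF₀ : ∀ t, constantCoeff (F t) = 0)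
    (hF_zero : ∀ a : ι ⊕ κ → k, (∀ t, eval a (F t) = 0) →
      (∀ i, a (Sum.inl i) = 0) ∨ (∀ j, a (Sum.inr j) = 0)) :
    (irrelevantIdeal k ι κ).height ≤ Fintype.card τ := by
  classical
  let G : τ → SegreRing k ι κ := fun t => ⟨F t, hF t⟩
  let J := Ideal.span (Set.range G)
  have hJ : J ≤ irrelevantIdeal k ι κ := Ideal.span_le.mpr (Set.range_subset_iff.mpr hF₀)
  have hJS : J.map (algebraMap (SegreRing k ι κ) S) = Ideal.span (Set.range F) := by
    rw [Ideal.map_span, ← Set.range_comp]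
    rfl
  have hMJ : irrelevantIdeal k ι κ ≤ J.radical := by
    intro p hp
    have hpS : algebraMap (SegreRing k ι κ) S p ∈ (J.map (algebraMap _ S)).radical := by
      rw [hJS, ← vanishingIdeal_zeroLocus_eq_radical (K := k)]
      intro a ha
      refine eval_eq_zero_of_constantCoeff_eq_zero p.2 hp (hF_zero a fun t => ?_)
      simpa using ha (F t) (Ideal.subset_span ⟨t, rfl⟩)
    obtain ⟨n, hn⟩ := hpS
    refine ⟨n, ?_⟩
    rw [← GradedRing.comap_map_gradeZero (segreGrading k ι κ) J, Ideal.mem_comap, map_pow]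
    exact hn
  obtain ⟨q, hq, -⟩ := Ideal.exists_minimalPrimes_le hJ
  have hq' : q ∈ (Ideal.span ↑(Finset.univ.image G)).minimalPrimes := by
    simpa [Finset.coe_image, Set.image_univ] using hq
  calc (irrelevantIdeal k ι κ).height
      ≤ q.height := Ideal.height_mono (hMJ.trans (hq.1.1.radical_le_iff.mpr hq.1.2))
    _ ≤ (Finset.univ.image G).card := Ideal.height_le_card_of_mem_minimalPrimes_span_finset hq'
    _ ≤ Fintype.card τ := by exact_mod_cast Finset.card_image_le

section Bilinear

variable {τ : Type*} [DecidableEq ι] [DecidableEq κ]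
  (φ : (ι → k) →ₗ[k] (κ → k) →ₗ[k] (τ → k))

def bilinPoly (t : τ) : S :=
  ∑ i, ∑ j, C (φ (Pi.single i 1) (Pi.single j 1) t) * (X (Sum.inl i) * X (Sum.inr j))

theorem bilinPoly_mem (t : τ) : bilinPoly φ t ∈ SegreRing k ι κ :=
  Submodule.sum_mem _ fun i _ => Submodule.sum_mem _ fun j _ => by
    rw [← smul_eq_C_mul]
    exact Submodule.smul_mem _ _ (X_mul_X_mem i j)

theorem constantCoeff_bilinPoly (t : τ) : constantCoeff (bilinPoly φ t) = 0 := by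
  simp [bilinPoly]

theorem eval_bilinPoly (a : ι ⊕ κ → k) (t : τ) :
    eval a (bilinPoly φ t) = φ (a ∘ Sum.inl) (a ∘ Sum.inr) t := by
  conv_rhs => rw [pi_eq_sum_univ' (a ∘ Sum.inl), pi_eq_sum_univ' (a ∘ Sum.inr)]
  simp only [bilinPoly, map_sum, LinearMap.sum_apply, map_smul, LinearMap.smul_apply,
    Finset.sum_apply, Pi.smul_apply, smul_eq_mul, eval_mul, eval_C, eval_X, Function.comp_apply]
  rw [Finset.sum_comm]
  simp only [Finset.mul_sum]
  exact Finset.sum_congr rfl fun i _ => Finset.sum_congr rfl fun j _ => by ring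

end Bilinear

end SegreRing

end

theorem card_add_card_le_of_nondegenerate {k ι κ τ : Type*} [Field k] [IsAlgClosed k]
    [Fintype ι] [Fintype κ] [Fintype τ] [Nonempty ι] [Nonempty κ]
    (φ : (ι → k) →ₗ[k] (κ → k) →ₗ[k] (τ → k))
    (hφ : ∀ u, u ≠ 0 → ∀ v, v ≠ 0 → φ u v ≠ 0) :
    Fintype.card ι + Fintype.card κ ≤ Fintype.card τ + 1 := by
  classical
  have hzero (a : ι ⊕ κ → k) (ha : ∀ t, eval a (SegreRing.bilinPoly φ t) = 0) :
      (∀ i, a (Sum.inl i) = 0) ∨ (∀ j, a (Sum.inr j) = 0) := by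
    simp only [SegreRing.eval_bilinPoly] at ha
    by_contra! h
    obtain ⟨⟨i, hi⟩, ⟨j, hj⟩⟩ := h
    exact hφ (a ∘ Sum.inl) (Function.ne_iff.mpr ⟨i, hi⟩) (a ∘ Sum.inr)
      (Function.ne_iff.mpr ⟨j, hj⟩) (funext ha)
  have h : Fintype.card ι + Fintype.card κ - 1 ≤ Fintype.card τ := by
    exact_mod_cast SegreRing.card_add_card_sub_one_le_height_irrelevantIdeal.trans
      (SegreRing.height_irrelevantIdeal_le _ (SegreRing.bilinPoly_mem φ)
        (SegreRing.constantCoeff_bilinPoly φ) hzero)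
  have := Fintype.card_pos (α := ι)
  omega

/-- **Hartshorne's bilinear map lemma.** If `k` is algebraically closed, `U, V, W` are
finite-dimensional `k`-vector spaces with `U ≠ 0` and `V ≠ 0`, and `φ : U × V → W` is a
bilinear map with `φ(u, v) ≠ 0` whenever `u ≠ 0` and `v ≠ 0`, then
`dim W ≥ dim U + dim V - 1`. -/
theorem bilinear_map_lemma {k U V W : Type*} [Field k] [IsAlgClosed k]
    [AddCommGroup U] [Module k U] [FiniteDimensional k U]
    [AddCommGroup V] [Module k V] [FiniteDimensional k V]
    [AddCommGroup W] [Module k W] [FiniteDimensional k W]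
    [Nontrivial U] [Nontrivial V]
    (φ : U →ₗ[k] V →ₗ[k] W)
    (hφ : ∀ u : U, u ≠ 0 → ∀ v : V, v ≠ 0 → φ u v ≠ 0) :
    Module.finrank k U + Module.finrank k V ≤ Module.finrank k W + 1 := by
  have : Nonempty (Fin (Module.finrank k U)) := ⟨⟨0, Module.finrank_pos⟩⟩
  have : Nonempty (Fin (Module.finrank k V)) := ⟨⟨0, Module.finrank_pos⟩⟩
  let eU := (Module.finBasis k U).equivFun
  let eV := (Module.finBasis k V).equivFun
  let eW := (Module.finBasis k W).equivFun
  let ψ : (Fin _ → k) →ₗ[k] (Fin _ → k) →ₗ[k] (Fin _ → k) :=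
    (φ.compr₂ eW.toLinearMap).compl₁₂ eU.symm.toLinearMap eV.symm.toLinearMap
  have key := card_add_card_le_of_nondegenerate ψ fun u hu v hv => by
    simpa [ψ] using hφ (eU.symm u) (by simpa using hu) (eV.symm v) (by simpa using hv)
  simpa using key
end

section
/- Let $k$ be an algebraically closed field, $d \geq 1$ an integer, and $\Gamma \subset \mathbb{P}^2(k)$ a set of $2d+1$ points such that no three of them are collinear. Then $\Gamma$ imposes independent conditions on curves of degree $d$: the evaluation map from the space of homogeneous forms of degree $d$ in $X_0,X_1,X_2$ to $k^{\Gamma}$ (given by evaluating at fixed homogeneous coordinate representatives of the points) is surjective. -/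
open MvPolynomial

section aux

variable {k : Type*} [Field k]

/-- The linear form `x ↦ det ![u, v, x]` as a polynomial. -/
noncomputable def lineForm (u v : Fin 3 → k) : MvPolynomial (Fin 3) k :=
  C (u 1 * v 2 - u 2 * v 1) * X 0 + C (u 2 * v 0 - u 0 * v 2) * X 1 +
    C (u 0 * v 1 - u 1 * v 0) * X 2

lemma lineForm_isHomogeneous (u v : Fin 3 → k) : (lineForm u v).IsHomogeneous 1 := by
  unfold lineForm
  exact (((isHomogeneous_C _ _).mul (isHomogeneous_X _ _)).add
    ((isHomogeneous_C _ _).mul (isHomogeneous_X _ _))).add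
    ((isHomogeneous_C _ _).mul (isHomogeneous_X _ _))

lemma eval_lineForm (u v w : Fin 3 → k) :
    eval w (lineForm u v) = Matrix.det (Matrix.of ![u, v, w]) := by
  rw [Matrix.det_fin_three]
  simp [lineForm, Matrix.of_apply]
  ring

lemma det_ne_zero_of_li {u v w : Fin 3 → k} (h : LinearIndependent k ![u, v, w]) :
    Matrix.det (Matrix.of ![u, v, w]) ≠ 0 := by
  have : IsUnit (Matrix.of ![u, v, w]) :=
    Matrix.linearIndependent_rows_iff_isUnit.mp (by exact h)
  rw [Matrix.isUnit_iff_isUnit_det] at this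
  exact this.ne_zero

end aux

/-- A set of `2d+1` points of `ℙ²`, no three of which are collinear, imposes independent
conditions on curves of degree `d`: the evaluation map from degree-`d` homogeneous forms
(at fixed homogeneous coordinate representatives of the points) is surjective. -/
theorem points_impose_independent_conditions {k : Type*} [Field k] [IsAlgClosed k]
    (d : ℕ) (hd : 1 ≤ d)
    (P : Fin (2 * d + 1) → (Fin 3 → k))
    (hP : ∀ i j l : Fin (2 * d + 1), i ≠ j → j ≠ l → i ≠ l →
      LinearIndependent k ![P i, P j, P l]) :
    ∀ c : Fin (2 * d + 1) → k, ∃ f : MvPolynomial (Fin 3) k,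
      f.IsHomogeneous d ∧ ∀ i, eval (P i) f = c i := by
  intro c
  -- pairing of the `2d` points other than `i`
  set a : Fin d → Fin (2 * d) := fun t => ⟨2 * t, by omega⟩ with ha
  set b : Fin d → Fin (2 * d) := fun t => ⟨2 * t + 1, by omega⟩ with hb
  -- the form vanishing at all points except `P i`
  set F : Fin (2 * d + 1) → MvPolynomial (Fin 3) k := fun i =>
    ∏ t : Fin d, lineForm (P (i.succAbove (a t))) (P (i.succAbove (b t))) with hF
  have hFhom : ∀ i, (F i).IsHomogeneous d := by
    intro i
    have := IsHomogeneous.prod (Finset.univ) (fun t : Fin d =>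
      lineForm (P (i.succAbove (a t))) (P (i.succAbove (b t)))) (fun _ => 1)
      (fun t _ => lineForm_isHomogeneous _ _)
    simpa using this
  have hFzero : ∀ i j, j ≠ i → eval (P j) (F i) = 0 := by
    intro i j hji
    obtain ⟨m, hm⟩ := Fin.exists_succAbove_eq hji
    set t : Fin d := ⟨(m : ℕ) / 2, by omega⟩ with ht
    rw [hF]
    simp only [map_prod]
    apply Finset.prod_eq_zero (Finset.mem_univ t)
    rw [eval_lineForm]
    rcases Nat.even_or_odd (m : ℕ) with he | ho
    · rw [Nat.even_iff] at he
      have : a t = m := by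
        simp only [ha, ht, Fin.ext_iff]
        omega
      rw [this, hm]
      exact Matrix.det_zero_of_row_eq (i := (0 : Fin 3)) (j := 2) (by decide) rfl
    · rw [Nat.odd_iff] at ho
      have : b t = m := by
        simp only [hb, ht, Fin.ext_iff]
        omega
      rw [this, hm]
      exact Matrix.det_zero_of_row_eq (i := (1 : Fin 3)) (j := 2) (by decide) rfl
  have hFne : ∀ i, eval (P i) (F i) ≠ 0 := by
    intro i
    rw [hF]
    simp only [map_prod]
    apply Finset.prod_ne_zero_iff.mpr
    intro t _
    rw [eval_lineForm]
    apply det_ne_zero_of_li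
    have hab : i.succAbove (a t) ≠ i.succAbove (b t) := by
      intro h
      have := Fin.succAbove_right_injective (p := i) h
      simp only [ha, hb, Fin.ext_iff] at this
      omega
    exact hP _ _ _ hab (Fin.succAbove_ne i (b t)) (Fin.succAbove_ne i (a t))
  refine ⟨∑ i, C (c i / eval (P i) (F i)) * F i, ?_, ?_⟩
  · exact IsHomogeneous.sum _ _ _ fun i _ => by
      simpa using (isHomogeneous_C _ (c i / eval (P i) (F i))).mul (hFhom i)
  · intro j
    rw [map_sum]
    rw [Finset.sum_eq_single j]
    · simp [div_mul_cancel₀ _ (hFne j)]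
    · intro i _ hij
      simp [hFzero i j (by exact fun h => hij h.symm)]
    · simp
end

section
/- Let $k$ be an algebraically closed field of characteristic $0$, let $d \geq 5$, and let $\Gamma \subset \mathbb{P}^2(k)$ be a set of $d$ distinct points satisfying the Cayley–Bacharach condition with respect to curves of degree $d-3$: every homogeneous form of degree $d-3$ vanishing at some $d-1$ of the points of $\Gamma$ vanishes at all points of $\Gamma$. Then the points of $\Gamma$ are collinear. -/
open MvPolynomial

section Helpers

variable {k : Type*} [Field k]

noncomputable def Lf (a : Fin 3 → k) : MvPolynomial (Fin 3) k := ∑ t, C (a t) * X t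

lemma eval_Lf (a p : Fin 3 → k) : eval p (Lf a) = ∑ t, a t * p t := by
  simp [Lf]

lemma Lf_hom (a : Fin 3 → k) : (Lf a).IsHomogeneous 1 :=
  MvPolynomial.IsHomogeneous.sum _ _ _ fun t _ => isHomogeneous_C_mul_X (a t) t

lemma multiset_prod_Lf_hom (F : Multiset (Fin 3 → k)) :
    ((F.map Lf).prod).IsHomogeneous (Multiset.card F) := by
  induction F using Multiset.induction_on with
  | empty => simpa using MvPolynomial.isHomogeneous_one (Fin 3) k
  | cons a s ih =>
      simp only [Multiset.map_cons, Multiset.prod_cons, Multiset.card_cons]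
      simpa [add_comm] using (Lf_hom a).mul ih

lemma dualsep (W : Submodule k (Fin 3 → k)) (z : Fin 3 → k) (hz : z ∉ W) :
    ∃ a : Fin 3 → k, (∀ x ∈ W, (∑ t, a t * x t) = 0) ∧ (∑ t, a t * z t) ≠ 0 := by
  have hz' : W.mkQ z ≠ 0 := by simpa [Submodule.Quotient.mk_eq_zero] using hz
  obtain ⟨g, hg⟩ : ∃ g : Module.Dual k ((Fin 3 → k) ⧸ W), g (W.mkQ z) ≠ 0 := by
    by_contra h
    push_neg at h
    exact hz' ((Module.forall_dual_apply_eq_zero_iff k _).mp h)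
  set h : (Fin 3 → k) →ₗ[k] k := g ∘ₗ W.mkQ with hh
  have key : ∀ x : Fin 3 → k,
      (∑ t, (h fun j => if t = j then (1:k) else 0) * x t) = h x := by
    intro x
    rw [LinearMap.pi_apply_eq_sum_univ h x]
    simp [mul_comm, smul_eq_mul]
  refine ⟨fun t => h fun j => if t = j then 1 else 0, ?_, ?_⟩
  · intro x hx
    rw [key]
    have : W.mkQ x = 0 := (Submodule.Quotient.mk_eq_zero _).mpr hx
    simp [hh, this]
  · rw [key]
    exact hg

/-- The key contradiction: if some point `P j` is avoided by a family of at most `d - 3`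
linear forms which jointly cover all other points, then the Cayley–Bacharach condition fails. -/
lemma key_lemma (d : ℕ) (hd : 5 ≤ d) (P : Fin d → (Fin 3 → k))
    (hCB : ∀ j : Fin d, ∀ f : MvPolynomial (Fin 3) k, f.IsHomogeneous (d - 3) →
      (∀ i, i ≠ j → eval (P i) f = 0) → ∀ i, eval (P i) f = 0)
    (j : Fin d) (hPj : P j ≠ 0) (F : Multiset (Fin 3 → k))
    (hcard : Multiset.card F ≤ d - 3)
    (hj : ∀ a ∈ F, (∑ t, a t * P j t) ≠ 0)
    (hcov : ∀ i : Fin d, i ≠ j → ∃ a ∈ F, (∑ t, a t * P i t) = 0) : False := by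
  obtain ⟨t0, ht0⟩ : ∃ t, P j t ≠ 0 := by
    by_contra h
    push_neg at h
    exact hPj (funext h)
  set e : Fin 3 → k := Pi.single t0 1 with he_def
  have he : (∑ t, e t * P j t) ≠ 0 := by
    simpa [he_def, Pi.single_apply] using ht0
  set f : MvPolynomial (Fin 3) k :=
    (F.map Lf).prod * (Lf e) ^ (d - 3 - Multiset.card F) with hf_def
  have hfh : f.IsHomogeneous (d - 3) := by
    have h1 := multiset_prod_Lf_hom (k := k) F
    have h2 := (Lf_hom e).pow (d - 3 - Multiset.card F)
    rw [one_mul] at h2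
    have := h1.mul h2
    rwa [Nat.add_sub_cancel' hcard] at this
  have hvan : ∀ i : Fin d, i ≠ j → eval (P i) f = 0 := by
    intro i hi
    obtain ⟨a, haF, ha⟩ := hcov i hi
    rw [hf_def, map_mul]
    apply mul_eq_zero_of_left
    rw [map_multiset_prod, Multiset.map_map]
    apply Multiset.prod_eq_zero
    rw [Multiset.mem_map]
    exact ⟨a, haF, by rw [Function.comp_apply, eval_Lf, ha]⟩
  have h0 := hCB j f hfh hvan j
  rw [hf_def, map_mul, map_pow, map_multiset_prod, Multiset.map_map] at h0
  rcases mul_eq_zero.mp h0 with h | h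
  · obtain ⟨a, haF, ha⟩ := Multiset.mem_map.mp (Multiset.prod_eq_zero_iff.mp h)
    exact hj a haF (by rwa [Function.comp_apply, eval_Lf] at ha)
  · have := pow_eq_zero_iff'.mp h
    rw [eval_Lf] at this
    exact he this.1

end Helpers

/-- If `d ≥ 5` and a set of `d` distinct points of `ℙ²` satisfies the Cayley–Bacharach
condition with respect to curves of degree `d - 3` (every degree-`(d-3)` form vanishing at
some `d-1` of the points vanishes at all of them), then the points are collinear. -/
theorem cayley_bacharach_implies_collinear {k : Type*} [Field k] [IsAlgClosed k] [CharZero k]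
    (d : ℕ) (hd : 5 ≤ d)
    (P : Fin d → (Fin 3 → k))
    (hdist : ∀ i j : Fin d, i ≠ j → LinearIndependent k ![P i, P j])
    (hCB : ∀ j : Fin d, ∀ f : MvPolynomial (Fin 3) k, f.IsHomogeneous (d - 3) →
      (∀ i, i ≠ j → eval (P i) f = 0) → ∀ i, eval (P i) f = 0) :
    ∃ a : Fin 3 → k, a ≠ 0 ∧ ∀ i, (∑ t, a t * P i t) = 0 := by
  classical
  by_contra hcol
  push_neg at hcol
  -- every point is nonzero
  have hPne : ∀ i : Fin d, P i ≠ 0 := by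
    intro i
    obtain ⟨i', hi'⟩ := Fintype.exists_ne_of_one_lt_card (by simpa using by omega : 1 < Fintype.card (Fin d)) i
    have h2 := (linearIndependent_fin2.mp (hdist i' i hi')).1
    simpa using h2
  -- no point is in the span of another
  have hnotspan : ∀ i j : Fin d, i ≠ j → P j ∉ Submodule.span k {P i} := by
    intro i j hij hmem
    obtain ⟨c, hc⟩ := Submodule.mem_span_singleton.mp hmem
    have h2 := (linearIndependent_fin2.mp (hdist j i hij.symm)).2 c
    simp only [Matrix.cons_val_one, Matrix.head_cons, Matrix.cons_val_zero] at h2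
    exact h2 hc
  -- a line through one point avoiding another
  have hline1 : ∀ i j : Fin d, i ≠ j →
      ∃ c : Fin 3 → k, (∑ t, c t * P i t) = 0 ∧ (∑ t, c t * P j t) ≠ 0 := by
    intro i j hij
    obtain ⟨c, hc1, hc2⟩ := dualsep (Submodule.span k {P i}) (P j) (hnotspan i j hij)
    exact ⟨c, hc1 _ (Submodule.mem_span_singleton_self _), hc2⟩
  by_cases hA : ∃ i1 i2 i3 : Fin d, i1 ≠ i2 ∧ i1 ≠ i3 ∧ i2 ≠ i3 ∧ ∃ a : Fin 3 → k,
      a ≠ 0 ∧ (∑ t, a t * P i1 t) = 0 ∧ (∑ t, a t * P i2 t) = 0 ∧ (∑ t, a t * P i3 t) = 0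
  · -- Case A : some 3 points are collinear on a line `a`; take `j` off that line
    obtain ⟨i1, i2, i3, h12, h13, h23, a, ha0, ha1, ha2, ha3⟩ := hA
    obtain ⟨j, hja⟩ := hcol a ha0
    have hbex : ∀ i : Fin d, ∃ c : Fin 3 → k,
        i ≠ j → ((∑ t, c t * P i t) = 0 ∧ (∑ t, c t * P j t) ≠ 0) := by
      intro i
      by_cases h : i = j
      · exact ⟨0, fun h' => absurd h h'⟩
      · obtain ⟨c, hc⟩ := hline1 i j h
        exact ⟨c, fun _ => hc⟩
    choose b hb using hbex
    set T : Finset (Fin d) :=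
      Finset.univ.filter (fun i => i ≠ j ∧ (∑ t, a t * P i t) ≠ 0) with hT
    have hTsub : T ⊆ ({i1, i2, i3, j} : Finset (Fin d))ᶜ := by
      intro i hi
      rw [hT, Finset.mem_filter] at hi
      obtain ⟨-, hij, hia⟩ := hi
      simp only [Finset.mem_compl, Finset.mem_insert, Finset.mem_singleton]
      push_neg
      refine ⟨?_, ?_, ?_, hij⟩ <;> rintro rfl <;> [exact hia ha1; exact hia ha2; exact hia ha3]
    have hj1 : j ≠ i1 := by rintro rfl; exact hja ha1
    have hj2 : j ≠ i2 := by rintro rfl; exact hja ha2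
    have hj3 : j ≠ i3 := by rintro rfl; exact hja ha3
    have hcard4 : ({i1, i2, i3, j} : Finset (Fin d)).card = 4 := by
      rw [show ({i1, i2, i3, j} : Finset (Fin d)) = insert i1 (insert i2 (insert i3 {j})) from rfl]
      rw [Finset.card_insert_of_notMem (by simp [h12, h13, hj1.symm]),
        Finset.card_insert_of_notMem (by simp [h23, hj2.symm]),
        Finset.card_insert_of_notMem (by simp [hj3.symm]), Finset.card_singleton]
    have hTle : T.card ≤ d - 4 := by
      have := Finset.card_le_card hTsub
      rwa [Finset.card_compl, hcard4, Fintype.card_fin] at this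
    refine key_lemma d hd P hCB j (hPne j) (a ::ₘ T.val.map b) ?_ ?_ ?_
    · rw [Multiset.card_cons, Multiset.card_map]
      have : T.val.card = T.card := rfl
      omega
    · intro c hc
      rcases Multiset.mem_cons.mp hc with rfl | hc
      · exact hja
      · obtain ⟨i, hiT, rfl⟩ := Multiset.mem_map.mp hc
        have hiT' : i ∈ T := hiT
        rw [hT, Finset.mem_filter] at hiT'
        exact (hb i hiT'.2.1).2
    · intro i hij
      by_cases hia : (∑ t, a t * P i t) = 0
      · exact ⟨a, Multiset.mem_cons_self _ _, hia⟩
      · have hiT : i ∈ T := by rw [hT, Finset.mem_filter]; exact ⟨Finset.mem_univ _, hij, hia⟩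
        exact ⟨b i, Multiset.mem_cons_of_mem (Multiset.mem_map.mpr ⟨i, hiT, rfl⟩),
          (hb i hij).1⟩
  · -- Case B : no 3 points are collinear
    obtain ⟨i0, hi0⟩ : ∃ i : Fin d, (i : ℕ) = 0 := ⟨⟨0, by omega⟩, rfl⟩
    obtain ⟨i1, hi1⟩ : ∃ i : Fin d, (i : ℕ) = 1 := ⟨⟨1, by omega⟩, rfl⟩
    obtain ⟨i2, hi2⟩ : ∃ i : Fin d, (i : ℕ) = 2 := ⟨⟨2, by omega⟩, rfl⟩
    obtain ⟨i3, hi3⟩ : ∃ i : Fin d, (i : ℕ) = 3 := ⟨⟨3, by omega⟩, rfl⟩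
    obtain ⟨i4, hi4⟩ : ∃ i : Fin d, (i : ℕ) = 4 := ⟨⟨4, by omega⟩, rfl⟩
    -- a line through two points avoiding `P i4`
    have hline2 : ∀ x y : Fin d, x ≠ y → x ≠ i4 → y ≠ i4 →
        ∃ c : Fin 3 → k, (∑ t, c t * P x t) = 0 ∧ (∑ t, c t * P y t) = 0 ∧
          (∑ t, c t * P i4 t) ≠ 0 := by
      intro x y hxy hxj hyj
      set W : Submodule k (Fin 3 → k) := Submodule.span k ({P x, P y} : Set (Fin 3 → k)) with hW
      have hPx : P x ∈ W := Submodule.subset_span (by simp)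
      have hPy : P y ∈ W := Submodule.subset_span (by simp)
      obtain ⟨z, hz⟩ : ∃ z, z ∉ W := by
        by_contra hz
        push_neg at hz
        have hWtop : W = ⊤ := Submodule.eq_top_iff'.mpr hz
        have h2 : Module.finrank k W ≤ 2 := by
          refine le_trans (finrank_span_le_card _) ?_
          rw [Set.toFinset_insert]
          exact le_trans (Finset.card_insert_le _ _) (by simp)
        rw [hWtop, finrank_top, Module.finrank_pi] at h2
        simp at h2
      have hPjW : P i4 ∉ W := by
        intro hmem
        obtain ⟨c, hc1, hc2⟩ := dualsep W z hz
        refine hA ⟨x, y, i4, hxy, hxj, hyj, c, ?_, hc1 _ hPx, hc1 _ hPy, hc1 _ hmem⟩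
        rintro rfl
        simp at hc2
      obtain ⟨c, hc1, hc2⟩ := dualsep W (P i4) hPjW
      exact ⟨c, hc1 _ hPx, hc1 _ hPy, hc2⟩
    have h01 : i0 ≠ i1 := by simp [Fin.ext_iff, hi0, hi1]
    have h04 : i0 ≠ i4 := by simp [Fin.ext_iff, hi0, hi4]
    have h14 : i1 ≠ i4 := by simp [Fin.ext_iff, hi1, hi4]
    have h23' : i2 ≠ i3 := by simp [Fin.ext_iff, hi2, hi3]
    have h24 : i2 ≠ i4 := by simp [Fin.ext_iff, hi2, hi4]
    have h34 : i3 ≠ i4 := by simp [Fin.ext_iff, hi3, hi4]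
    obtain ⟨a1, ha1x, ha1y, ha1j⟩ := hline2 i0 i1 h01 h04 h14
    obtain ⟨a2, ha2x, ha2y, ha2j⟩ := hline2 i2 i3 h23' h24 h34
    have hbex : ∀ i : Fin d, ∃ c : Fin 3 → k,
        i ≠ i4 → ((∑ t, c t * P i t) = 0 ∧ (∑ t, c t * P i4 t) ≠ 0) := by
      intro i
      by_cases h : i = i4
      · exact ⟨0, fun h' => absurd h h'⟩
      · obtain ⟨c, hc⟩ := hline1 i i4 h
        exact ⟨c, fun _ => hc⟩
    choose b hb using hbex
    set T : Finset (Fin d) :=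
      Finset.univ.filter (fun i => i ≠ i0 ∧ i ≠ i1 ∧ i ≠ i2 ∧ i ≠ i3 ∧ i ≠ i4) with hT
    have hTsub : T ⊆ ({i0, i1, i2, i3, i4} : Finset (Fin d))ᶜ := by
      intro i hi
      rw [hT, Finset.mem_filter] at hi
      simp only [Finset.mem_compl, Finset.mem_insert, Finset.mem_singleton]
      push_neg
      exact hi.2
    have hcard5 : ({i0, i1, i2, i3, i4} : Finset (Fin d)).card = 5 := by
      rw [show ({i0, i1, i2, i3, i4} : Finset (Fin d)) =
        insert i0 (insert i1 (insert i2 (insert i3 {i4}))) from rfl]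
      rw [Finset.card_insert_of_notMem (by simp [Fin.ext_iff, hi0, hi1, hi2, hi3, hi4]),
        Finset.card_insert_of_notMem (by simp [Fin.ext_iff, hi1, hi2, hi3, hi4]),
        Finset.card_insert_of_notMem (by simp [Fin.ext_iff, hi2, hi3, hi4]),
        Finset.card_insert_of_notMem (by simp [Fin.ext_iff, hi3, hi4]),
        Finset.card_singleton]
    have hTle : T.card ≤ d - 5 := by
      have := Finset.card_le_card hTsub
      rwa [Finset.card_compl, hcard5, Fintype.card_fin] at this
    refine key_lemma d hd P hCB i4 (hPne i4) (a1 ::ₘ a2 ::ₘ T.val.map b) ?_ ?_ ?_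
    · rw [Multiset.card_cons, Multiset.card_cons, Multiset.card_map]
      have : T.val.card = T.card := rfl
      omega
    · intro c hc
      rcases Multiset.mem_cons.mp hc with rfl | hc
      · exact ha1j
      rcases Multiset.mem_cons.mp hc with rfl | hc
      · exact ha2j
      obtain ⟨i, hiT, rfl⟩ := Multiset.mem_map.mp hc
      have hiT' : i ∈ T := hiT
      rw [hT, Finset.mem_filter] at hiT'
      exact (hb i hiT'.2.2.2.2.2).2
    · intro i hij
      by_cases h0 : i = i0
      · exact ⟨a1, Multiset.mem_cons_self _ _, h0 ▸ ha1x⟩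
      by_cases h1 : i = i1
      · exact ⟨a1, Multiset.mem_cons_self _ _, h1 ▸ ha1y⟩
      by_cases h2 : i = i2
      · exact ⟨a2, Multiset.mem_cons_of_mem (Multiset.mem_cons_self _ _), h2 ▸ ha2x⟩
      by_cases h3 : i = i3
      · exact ⟨a2, Multiset.mem_cons_of_mem (Multiset.mem_cons_self _ _), h3 ▸ ha2y⟩
      have hiT : i ∈ T := by
        rw [hT, Finset.mem_filter]
        exact ⟨Finset.mem_univ _, h0, h1, h2, h3, hij⟩
      exact ⟨b i, Multiset.mem_cons_of_mem (Multiset.mem_cons_of_mem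
        (Multiset.mem_map.mpr ⟨i, hiT, rfl⟩)), (hb i hij).1⟩
end
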